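/- Let H be an n×n real diagonal matrix and δH a symmetric perturbation such that for all nonzero x ∈ ℝⁿ, g_l ≤ (xᵀ(H+δH)x)/(xᵀHx) ≤ g_u with 0 < g_l ≤ g_u. Then for each i, g_l ≤ λ_i(H+δH)/λ_i(H) ≤ g_u, where λ_i denotes the i-th largest eigenvalue. -/

import Mathlib

/-!
Clearing the positive denominator `xᵀHx` turns the hypothesis into the Loewner sandwich
`g_l H ≤ H + δH ≤ g_u H`, and ordered eigenvalues are monotone in the Loewner order. That
monotonicity is the Courant–Fischer argument: if `S ≤ T`, a dimension count gives a nonzero `x`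
in the span of the top `i + 1` eigenvectors of `S` and of the bottom `n - i` eigenvectors of `T`,
and then `λᵢ(S) ‖x‖² ≤ ⟪x, S x⟫ ≤ ⟪x, T x⟫ ≤ λᵢ(T) ‖x‖²`.
-/

open scoped Matrix

/-- `μ` is the decreasing enumeration of the eigenvalues of the real symmetric matrix `A`. -/
def IsDecEigenvalueSeq {n : ℕ} (A : Matrix (Fin n) (Fin n) ℝ) (hA : A.IsHermitian)
    (μ : Fin n → ℝ) : Prop :=
  Antitone μ ∧ ∃ e : Equiv.Perm (Fin n), μ = hA.eigenvalues ∘ e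

open scoped InnerProductSpace
open Module Submodule

namespace OrthonormalBasis

variable {E ι : Type*} [NormedAddCommGroup E] [InnerProductSpace ℝ E] [Fintype ι]
  (b : OrthonormalBasis ι ℝ E)

theorem norm_sq_eq_sum_repr_sq (x : E) : ‖x‖ ^ 2 = ∑ j, b.repr x j ^ 2 := by
  simp [← b.sum_sq_norm_inner_right x, b.repr_apply_apply]

theorem inner_apply_self_eq_sum {T : E →ₗ[ℝ] E} {μ : ι → ℝ} (hT : ∀ j, T (b j) = μ j • b j)
    (x : E) : ⟪x, T x⟫_ℝ = ∑ j, μ j * b.repr x j ^ 2 := by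
  nth_rw 2 [← b.sum_repr x]
  simp only [map_sum, map_smul, hT, inner_sum, inner_smul_right]
  refine Finset.sum_congr rfl fun j _ => ?_
  rw [real_inner_comm, ← b.repr_apply_apply]
  ring

theorem repr_eq_zero_of_mem_span_image {s : Set ι} {x : E} (hx : x ∈ span ℝ (b '' s)) {j : ι}
    (hj : j ∉ s) : b.repr x j = 0 := by
  rw [← b.coe_toBasis] at hx
  rw [← b.coe_toBasis_repr_apply]
  exact Finsupp.notMem_support_iff.mp fun h => hj (b.toBasis.repr_support_subset_of_mem_span s hx h)

theorem finrank_span_image (s : Set ι) [Fintype s] :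
    finrank ℝ (span ℝ (b '' s)) = Fintype.card s := by
  rw [Set.image_eq_range]
  exact finrank_span_eq_card (b.orthonormal.linearIndependent.comp _ Subtype.val_injective)

variable [Preorder ι] {T : E →ₗ[ℝ] E} {μ : ι → ℝ}

theorem mul_norm_sq_le_inner_apply_self_of_mem_span_Iic (hμ : Antitone μ)
    (hT : ∀ j, T (b j) = μ j • b j) {i : ι} {x : E} (hx : x ∈ span ℝ (b '' Set.Iic i)) :
    μ i * ‖x‖ ^ 2 ≤ ⟪x, T x⟫_ℝ := by
  rw [b.inner_apply_self_eq_sum hT, b.norm_sq_eq_sum_repr_sq, Finset.mul_sum]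
  refine Finset.sum_le_sum fun j _ => ?_
  by_cases hj : j ∈ Set.Iic i
  · exact mul_le_mul_of_nonneg_right (hμ hj) (sq_nonneg _)
  · simp [b.repr_eq_zero_of_mem_span_image hx hj]

theorem inner_apply_self_le_mul_norm_sq_of_mem_span_Ici (hμ : Antitone μ)
    (hT : ∀ j, T (b j) = μ j • b j) {i : ι} {x : E} (hx : x ∈ span ℝ (b '' Set.Ici i)) :
    ⟪x, T x⟫_ℝ ≤ μ i * ‖x‖ ^ 2 := by
  rw [b.inner_apply_self_eq_sum hT, b.norm_sq_eq_sum_repr_sq, Finset.mul_sum]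
  refine Finset.sum_le_sum fun j _ => ?_
  by_cases hj : j ∈ Set.Ici i
  · exact mul_le_mul_of_nonneg_right (hμ hj) (sq_nonneg _)
  · simp [b.repr_eq_zero_of_mem_span_image hx hj]

end OrthonormalBasis

variable {E : Type*} [NormedAddCommGroup E] [InnerProductSpace ℝ E] {n : ℕ}

theorem OrthonormalBasis.exists_ne_zero_mem_span_Iic_mem_span_Ici
    (b b' : OrthonormalBasis (Fin n) ℝ E) (i : Fin n) :
    ∃ x ≠ 0, x ∈ span ℝ (b '' Set.Iic i) ∧ x ∈ span ℝ (b' '' Set.Ici i) := by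
  have : FiniteDimensional ℝ E := b.toBasis.finiteDimensional_of_finite
  have hdim : ¬ Disjoint (span ℝ (b '' Set.Iic i)) (span ℝ (b' '' Set.Ici i)) := fun h => by
    have := finrank_add_finrank_le_of_disjoint h
    rw [b.finrank_span_image, b'.finrank_span_image, finrank_eq_card_basis b.toBasis,
      Fintype.card_Iic, Fintype.card_Ici, Fin.card_Iic, Fin.card_Ici, Fintype.card_fin] at this
    omega
  simp only [Submodule.disjoint_def, not_forall] at hdim
  obtain ⟨x, hx, hx', hx0⟩ := hdim
  exact ⟨x, hx0, hx, hx'⟩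

theorem eigenvalue_le_of_forall_inner_apply_self_le {S T : E →ₗ[ℝ] E}
    {b b' : OrthonormalBasis (Fin n) ℝ E} {μ μ' : Fin n → ℝ} (hμ : Antitone μ)
    (hμ' : Antitone μ') (hS : ∀ j, S (b j) = μ j • b j) (hT : ∀ j, T (b' j) = μ' j • b' j)
    (hST : ∀ x ≠ 0, ⟪x, S x⟫_ℝ ≤ ⟪x, T x⟫_ℝ) (i : Fin n) : μ i ≤ μ' i := by
  obtain ⟨x, hx0, hx, hx'⟩ := b.exists_ne_zero_mem_span_Iic_mem_span_Ici b' i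
  refine le_of_mul_le_mul_right ?_ (by positivity : 0 < ‖x‖ ^ 2)
  calc μ i * ‖x‖ ^ 2 ≤ ⟪x, S x⟫_ℝ := b.mul_norm_sq_le_inner_apply_self_of_mem_span_Iic hμ hS hx
    _ ≤ ⟪x, T x⟫_ℝ := hST x hx0
    _ ≤ μ' i * ‖x‖ ^ 2 := b'.inner_apply_self_le_mul_norm_sq_of_mem_span_Ici hμ' hT hx'

theorem Matrix.inner_toEuclideanLin_self {ι : Type*} [Fintype ι] [DecidableEq ι]
    (A : Matrix ι ι ℝ) (x : EuclideanSpace ℝ ι) :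
    ⟪x, toEuclideanLin A x⟫_ℝ = WithLp.ofLp x ⬝ᵥ A *ᵥ WithLp.ofLp x := by
  simp [EuclideanSpace.inner_eq_star_dotProduct, Matrix.toLpLin_apply, dotProduct_comm]

theorem IsDecEigenvalueSeq.exists_orthonormalBasis {A : Matrix (Fin n) (Fin n) ℝ}
    {hA : A.IsHermitian} {μ : Fin n → ℝ} (hμ : IsDecEigenvalueSeq A hA μ) :
    ∃ b : OrthonormalBasis (Fin n) ℝ (EuclideanSpace ℝ (Fin n)),
      ∀ j, Matrix.toEuclideanLin A (b j) = μ j • b j := by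
  obtain ⟨-, e, rfl⟩ := hμ
  refine ⟨hA.eigenvectorBasis.reindex e.symm, fun j => ?_⟩
  apply WithLp.ofLp_injective
  simpa [Matrix.toLpLin_apply] using hA.mulVec_eigenvectorBasis (e j)

theorem eigenvalue_ratio_of_rayleigh_ratio_general {n : ℕ}
    (H δH : Matrix (Fin n) (Fin n) ℝ) (d : Fin n → ℝ)
    (hH : H = Matrix.diagonal d) (hd : ∀ i, 0 < d i)
    (hHsym : H.IsHermitian) (hsum : (H + δH).IsHermitian)
    (gl gu : ℝ) (hgl : 0 < gl) (hglu : gl ≤ gu)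
    (hray : ∀ x : Fin n → ℝ, x ≠ 0 →
      gl ≤ (x ⬝ᵥ (H + δH).mulVec x) / (x ⬝ᵥ H.mulVec x) ∧
      (x ⬝ᵥ (H + δH).mulVec x) / (x ⬝ᵥ H.mulVec x) ≤ gu)
    (μ μ' : Fin n → ℝ)
    (hμ : IsDecEigenvalueSeq H hHsym μ)
    (hμ' : IsDecEigenvalueSeq (H + δH) hsum μ') :
    ∀ i : Fin n, gl ≤ μ' i / μ i ∧ μ' i / μ i ≤ gu := by
  have hPD : H.PosDef := hH ▸ Matrix.posDef_diagonal_iff.mpr hd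
  have hμpos : ∀ i, 0 < μ i := by
    obtain ⟨-, e, rfl⟩ := hμ
    exact fun i => hPD.eigenvalues_pos (e i)
  obtain ⟨b, hb⟩ := hμ.exists_orthonormalBasis
  obtain ⟨b', hb'⟩ := hμ'.exists_orthonormalBasis
  set S := Matrix.toEuclideanLin H
  set T := Matrix.toEuclideanLin (H + δH)
  have hsmul (c : ℝ) (j : Fin n) : (c • S) (b j) = (c * μ j) • b j := by
    rw [LinearMap.smul_apply, hb, smul_smul]
  have hbounds (x : EuclideanSpace ℝ (Fin n)) (hx : x ≠ 0) :
      ⟪x, (gl • S) x⟫_ℝ ≤ ⟪x, T x⟫_ℝ ∧ ⟪x, T x⟫_ℝ ≤ ⟪x, (gu • S) x⟫_ℝ := by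
    have hx' : WithLp.ofLp x ≠ 0 := (WithLp.ofLp_eq_zero 2).not.mpr hx
    have hpos := hPD.dotProduct_mulVec_pos hx'
    simp only [star_trivial] at hpos
    simp only [LinearMap.smul_apply, inner_smul_right, Matrix.inner_toEuclideanLin_self, S, T]
    exact ⟨(le_div_iff₀ hpos).mp (hray _ hx').1, (div_le_iff₀ hpos).mp (hray _ hx').2⟩
  intro i
  rw [le_div_iff₀ (hμpos i), div_le_iff₀ (hμpos i)]
  exact ⟨eigenvalue_le_of_forall_inner_apply_self_le (hμ.1.const_mul hgl.le) hμ'.1 (hsmul gl) hb'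
      (fun x hx => (hbounds x hx).1) i,
    eigenvalue_le_of_forall_inner_apply_self_le hμ'.1 (hμ.1.const_mul (hgl.le.trans hglu))
      hb' (hsmul gu) (fun x hx => (hbounds x hx).2) i⟩

/-- Barlow–Demmel type lemma: if the Rayleigh quotients of `H + δH` relative to a diagonal
matrix `H` (with positive diagonal) lie in `[g_l, g_u]`, then so do the ratios of the
corresponding ordered eigenvalues. -/
theorem eigenvalue_ratio_of_rayleigh_ratio {n : ℕ}
    (H δH : Matrix (Fin n) (Fin n) ℝ) (d : Fin n → ℝ)
    (hH : H = Matrix.diagonal d) (hd : ∀ i, 0 < d i)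
    (hHsym : H.IsHermitian) (hδH : δH.IsHermitian) (hsum : (H + δH).IsHermitian)
    (gl gu : ℝ) (hgl : 0 < gl) (hglu : gl ≤ gu)
    (hray : ∀ x : Fin n → ℝ, x ≠ 0 →
      gl ≤ (x ⬝ᵥ (H + δH).mulVec x) / (x ⬝ᵥ H.mulVec x) ∧
      (x ⬝ᵥ (H + δH).mulVec x) / (x ⬝ᵥ H.mulVec x) ≤ gu)
    (μ μ' : Fin n → ℝ)
    (hμ : IsDecEigenvalueSeq H hHsym μ)
    (hμ' : IsDecEigenvalueSeq (H + δH) hsum μ') :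
    ∀ i : Fin n, gl ≤ μ' i / μ i ∧ μ' i / μ i ≤ gu :=
  eigenvalue_ratio_of_rayleigh_ratio_general H δH d hH hd hHsym hsum gl gu hgl hglu hray μ μ' hμ hμ'
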